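/- Let d ≥ 1, q > 1, Λ ≥ 0, c > 0, and let V : ℝ^d → ℝ be a positive function of class C² with D²V(x) ≤ Λ⟨x⟩^{q−2} Id and V(x) ≥ c⟨x⟩^q for all x ∈ ℝ^d. Then there exists a constant C > 0 such that for every z ∈ ℝ^d, every unit vector e ∈ S^{d−1}, and every α ∈ (0, 1]: (−1/V)(z+αe) + (−1/V)(z−αe) − 2(−1/V)(z) ≤ C α² ⟨z⟩^{−q−2}. -/

import Mathlib

/-!
Restrict to the line `h t = -1 / V (z + t • e)`. Then
`h'' = V''/V² - 2 V'²/V³ ≤ V''/V² ≤ Λ⟨x⟩^(q-2) / (c⟨x⟩^q)² = (Λ/c²) ⟨x⟩^(-q-2)` at `x = z + t • e`,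
and `⟨z⟩ ≤ √3 ⟨z + t • e⟩` for `|t| ≤ 1`, so `h'' ≤ K := C ⟨z⟩^(-q-2)` on `[-α, α]`
with `C = √3^(q+2) (Λ+1) / c²`.
Hence `K t² / 2 - h` is convex there, and its midpoint inequality at `±α` is the claim.
-/

open scoped RealInnerProductSpace
open Set InnerProductSpace

theorem second_difference_le_of_deriv2_le {f f' f'' : ℝ → ℝ} {K α : ℝ} (hα : 0 ≤ α)
    (hf : ∀ t ∈ Icc (-α) α, HasDerivAt f (f' t) t)
    (hf' : ∀ t ∈ Icc (-α) α, HasDerivAt f' (f'' t) t)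
    (hK : ∀ t ∈ Ioo (-α) α, f'' t ≤ K) :
    f α + f (-α) - 2 * f 0 ≤ K * α ^ 2 := by
  have hg : ∀ t ∈ Icc (-α) α, HasDerivAt (fun t => K / 2 * t ^ 2 - f t) (K * t - f' t) t :=
    fun t ht => (((hasDerivAt_pow 2 t).const_mul (K / 2)).fun_sub (hf t ht)).congr_deriv (by ring)
  have hg' : ∀ t ∈ Icc (-α) α, HasDerivAt (fun t => K * t - f' t) (K - f'' t) t :=
    fun t ht => by simpa using ((hasDerivAt_id' t).const_mul K).fun_sub (hf' t ht)
  have hconv : ConvexOn ℝ (Icc (-α) α) (fun t => K / 2 * t ^ 2 - f t) := by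
    refine convexOn_of_hasDerivWithinAt2_nonneg (convex_Icc _ _)
      (fun t ht => (hg t ht).continuousAt.continuousWithinAt)
      (fun t ht => (hg t (interior_subset ht)).hasDerivWithinAt)
      (fun t ht => (hg' t (interior_subset ht)).hasDerivWithinAt) fun t ht => ?_
    rw [interior_Icc] at ht
    exact sub_nonneg.2 (hK t ht)
  have hmid := hconv.2 (left_mem_Icc.2 (by linarith)) (right_mem_Icc.2 (by linarith))
    (by norm_num : (0 : ℝ) ≤ 1 / 2) (by norm_num : (0 : ℝ) ≤ 1 / 2) (by norm_num)
  norm_num at hmid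
  linarith

theorem HasDerivAt.neg_one_div {g : ℝ → ℝ} {g' t : ℝ} (hg : HasDerivAt g g' t) (h0 : g t ≠ 0) :
    HasDerivAt (fun s => -1 / g s) (g' / g t ^ 2) t :=
  ((hasDerivAt_const t (-1 : ℝ)).fun_div hg h0).congr_deriv (by ring)

theorem HasDerivAt.div_sq {g g₁ : ℝ → ℝ} {g' g₁' t : ℝ} (hg : HasDerivAt g g' t)
    (hg₁ : HasDerivAt g₁ g₁' t) (h0 : g t ≠ 0) :
    HasDerivAt (fun s => g₁ s / g s ^ 2) ((g₁' * g t - 2 * g₁ t * g') / g t ^ 3) t :=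
  (hg₁.fun_div (hg.fun_pow 2) (pow_ne_zero 2 h0)).congr_deriv (by field_simp; ring)

theorem sub_div_pow_three_le_div_sq {a b v : ℝ} (hv : 0 < v) :
    (a * v - 2 * b * b) / v ^ 3 ≤ a / v ^ 2 := by
  rw [div_le_div_iff₀ (by positivity) (by positivity)]
  nlinarith [mul_nonneg (mul_nonneg (sq_nonneg b) hv.le) (sq_nonneg v)]

section Bracket

variable {E : Type*} [SeminormedAddCommGroup E]

theorem sqrt_one_add_norm_sq_le_sqrt_three_mul {z w : E} (hw : ‖w‖ ≤ 1) :
    √(1 + ‖z‖ ^ 2) ≤ √3 * √(1 + ‖z + w‖ ^ 2) := by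
  rw [← Real.sqrt_mul (by norm_num)]
  refine Real.sqrt_le_sqrt ?_
  have : ‖z‖ ≤ ‖z + w‖ + 1 := by
    calc ‖z‖ = ‖z + w - w‖ := by rw [add_sub_cancel_right]
      _ ≤ ‖z + w‖ + ‖w‖ := norm_sub_le _ _
      _ ≤ ‖z + w‖ + 1 := by gcongr
  nlinarith [norm_nonneg z, sq_nonneg (‖z + w‖ - 1)]

theorem sqrt_one_add_norm_add_sq_rpow_neg_le {z w : E} (hw : ‖w‖ ≤ 1) {p : ℝ} (hp : 0 ≤ p) :
    √(1 + ‖z + w‖ ^ 2) ^ (-p) ≤ √3 ^ p * √(1 + ‖z‖ ^ 2) ^ (-p) := by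
  have hpos : 0 < √(1 + ‖z‖ ^ 2) / √3 := by positivity
  calc √(1 + ‖z + w‖ ^ 2) ^ (-p) ≤ (√(1 + ‖z‖ ^ 2) / √3) ^ (-p) :=
        Real.rpow_le_rpow_of_nonpos hpos
          ((div_le_iff₀' (by positivity)).2 (sqrt_one_add_norm_sq_le_sqrt_three_mul hw))
          (neg_nonpos.2 hp)
    _ = √3 ^ p * √(1 + ‖z‖ ^ 2) ^ (-p) := by
        rw [Real.div_rpow (by positivity) (by positivity), Real.rpow_neg (Real.sqrt_nonneg 3)]
        field_simp

end Bracket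

section Line

variable {E F : Type*} [NormedAddCommGroup E] [InnerProductSpace ℝ E]

theorem DifferentiableAt.hasDerivAt_comp_add_smul [NormedAddCommGroup F] [NormedSpace ℝ F]
    {f : E → F} {z e : E} {t : ℝ} (hf : DifferentiableAt ℝ f (z + t • e)) :
    HasDerivAt (fun s : ℝ => f (z + s • e)) (fderiv ℝ f (z + t • e) e) t :=
  hf.hasFDerivAt.comp_hasDerivAt t
    (by simpa using ((hasDerivAt_id t).smul_const e).const_add z)

variable [CompleteSpace E] {V : E → ℝ}

theorem DifferentiableAt.hasDerivAt_comp_add_smul_inner_gradient {z e : E} {t : ℝ}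
    (hV : DifferentiableAt ℝ V (z + t • e)) :
    HasDerivAt (fun s : ℝ => V (z + s • e)) ⟪gradient V (z + t • e), e⟫ t := by
  rw [inner_gradient_left]
  exact hV.hasDerivAt_comp_add_smul

theorem ContDiff.hasDerivAt_inner_gradient_comp_add_smul (hV : ContDiff ℝ 2 V) (z e : E) (t : ℝ) :
    HasDerivAt (fun s : ℝ => ⟪gradient V (z + s • e), e⟫)
      ⟪fderiv ℝ (gradient V) (z + t • e) e, e⟫ t := by
  have hgrad : ContDiff ℝ 1 (gradient V) :=
    (toDual ℝ E).symm.contDiff.comp (hV.fderiv_right (by norm_num))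
  simpa using ((hgrad.differentiable (by norm_num)) _).hasDerivAt_comp_add_smul.inner ℝ
    (hasDerivAt_const t e)

theorem neg_one_div_second_difference_le (hV : ContDiff ℝ 2 V) (hVpos : ∀ x, 0 < V x)
    {z e : E} {α K : ℝ} (hα : 0 ≤ α)
    (hK : ∀ t ∈ Icc (-α) α, ⟪fderiv ℝ (gradient V) (z + t • e) e, e⟫ / V (z + t • e) ^ 2 ≤ K) :
    -1 / V (z + α • e) + -1 / V (z - α • e) - 2 * (-1 / V z) ≤ K * α ^ 2 := by
  have hV1 t :=
    ((hV.differentiable (by norm_num)) (z + t • e)).hasDerivAt_comp_add_smul_inner_gradient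
  have hV2 := hV.hasDerivAt_inner_gradient_comp_add_smul z e
  have key := second_difference_le_of_deriv2_le hα
    (fun t _ => (hV1 t).neg_one_div (hVpos _).ne')
    (fun t _ => (hV1 t).div_sq (hV2 t) (hVpos _).ne')
    (fun t ht => (sub_div_pow_three_le_div_sq (hVpos _)).trans (hK t (Ioo_subset_Icc_self ht)))
  simpa [sub_eq_add_neg] using key

theorem inner_fderiv_gradient_div_sq_le {q Λ c : ℝ} (hΛ : 0 ≤ Λ) (hc : 0 < c)
    (hVhess : ∀ x v : E, ⟪fderiv ℝ (gradient V) x v, v⟫ ≤ Λ * √(1 + ‖x‖ ^ 2) ^ (q - 2) * ‖v‖ ^ 2)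
    (hVlb : ∀ x, c * √(1 + ‖x‖ ^ 2) ^ q ≤ V x) {x v : E} (hv : ‖v‖ = 1) :
    ⟪fderiv ℝ (gradient V) x v, v⟫ / V x ^ 2 ≤ Λ / c ^ 2 * √(1 + ‖x‖ ^ 2) ^ (-(q + 2)) := by
  set a := √(1 + ‖x‖ ^ 2)
  have ha : 0 < a := by positivity
  have hhess := hVhess x v
  rw [hv, one_pow, mul_one] at hhess
  calc ⟪fderiv ℝ (gradient V) x v, v⟫ / V x ^ 2 ≤ Λ * a ^ (q - 2) / V x ^ 2 := by
        gcongr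
    _ ≤ Λ * a ^ (q - 2) / (c * a ^ q) ^ 2 := by
        gcongr
        exact hVlb x
    _ = Λ / c ^ 2 * a ^ (-(q + 2)) := by
        have hpow : (a ^ q) ^ 2 * a ^ (-(q + 2)) = a ^ (q - 2) := by
          rw [← Real.rpow_natCast, ← Real.rpow_mul ha.le, ← Real.rpow_add ha]
          congr 1
          push_cast
          ring
        rw [← hpow]
        field_simp

end Line

theorem incremental_ratio_bound_neg_inv_general
    (d : ℕ) (q Lam c : ℝ) (hq : 1 < q) (hLam : 0 ≤ Lam) (hc : 0 < c)
    (V : EuclideanSpace ℝ (Fin d) → ℝ)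
    (hVpos : ∀ x, 0 < V x) (hV2 : ContDiff ℝ 2 V)
    (hVhess : ∀ (x : EuclideanSpace ℝ (Fin d)) (v : EuclideanSpace ℝ (Fin d)),
      ⟪fderiv ℝ (fun y => gradient V y) x v, v⟫
        ≤ Lam * Real.sqrt (1 + ‖x‖ ^ 2) ^ (q - 2) * ‖v‖ ^ 2)
    (hVlb : ∀ x, c * Real.sqrt (1 + ‖x‖ ^ 2) ^ q ≤ V x) :
    ∃ C > 0, ∀ (z : EuclideanSpace ℝ (Fin d)) (e : EuclideanSpace ℝ (Fin d)),
      ‖e‖ = 1 → ∀ α : ℝ, 0 < α → α ≤ 1 →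
        (-1 / V (z + α • e)) + (-1 / V (z - α • e)) - 2 * (-1 / V z)
          ≤ C * α ^ 2 * Real.sqrt (1 + ‖z‖ ^ 2) ^ (-q - 2) := by
  refine ⟨√3 ^ (q + 2) * (Lam + 1) / c ^ 2, by positivity, fun z e he α hα hα1 => ?_⟩
  rw [show -q - 2 = -(q + 2) by ring, mul_right_comm]
  refine neg_one_div_second_difference_le hV2 hVpos hα.le fun t ht => ?_
  have hte : ‖t • e‖ ≤ 1 := by
    rw [norm_smul, he, mul_one, Real.norm_eq_abs, abs_le]
    constructor <;> linarith [ht.1, ht.2]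
  calc ⟪fderiv ℝ (gradient V) (z + t • e) e, e⟫ / V (z + t • e) ^ 2
      ≤ Lam / c ^ 2 * √(1 + ‖z + t • e‖ ^ 2) ^ (-(q + 2)) :=
        inner_fderiv_gradient_div_sq_le hLam hc hVhess hVlb he
    _ ≤ Lam / c ^ 2 * (√3 ^ (q + 2) * √(1 + ‖z‖ ^ 2) ^ (-(q + 2))) := by
        gcongr
        exact sqrt_one_add_norm_add_sq_rpow_neg_le hte (by linarith)
    _ ≤ √3 ^ (q + 2) * (Lam + 1) / c ^ 2 * √(1 + ‖z‖ ^ 2) ^ (-(q + 2)) := by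
        rw [← mul_assoc, mul_comm (Lam / c ^ 2), mul_div_assoc]
        gcongr
        linarith

/-- The second-order incremental ratio bound for `-1/V` from Section 3.4,
verifying the first asymptotic hypothesis (3.7) of Theorem 3.1. -/
theorem incremental_ratio_bound_neg_inv
    (d : ℕ) (hd : 1 ≤ d) (q Lam c : ℝ) (hq : 1 < q) (hLam : 0 ≤ Lam) (hc : 0 < c)
    (V : EuclideanSpace ℝ (Fin d) → ℝ)
    (hVpos : ∀ x, 0 < V x) (hV2 : ContDiff ℝ 2 V)
    (hVhess : ∀ (x : EuclideanSpace ℝ (Fin d)) (v : EuclideanSpace ℝ (Fin d)),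
      ⟪fderiv ℝ (fun y => gradient V y) x v, v⟫
        ≤ Lam * Real.sqrt (1 + ‖x‖ ^ 2) ^ (q - 2) * ‖v‖ ^ 2)
    (hVlb : ∀ x, c * Real.sqrt (1 + ‖x‖ ^ 2) ^ q ≤ V x) :
    ∃ C > 0, ∀ (z : EuclideanSpace ℝ (Fin d)) (e : EuclideanSpace ℝ (Fin d)),
      ‖e‖ = 1 → ∀ α : ℝ, 0 < α → α ≤ 1 →
        (-1 / V (z + α • e)) + (-1 / V (z - α • e)) - 2 * (-1 / V z)
          ≤ C * α ^ 2 * Real.sqrt (1 + ‖z‖ ^ 2) ^ (-q - 2) :=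
  incremental_ratio_bound_neg_inv_general d q Lam c hq hLam hc V hVpos hV2 hVhess hVlb
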